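/- Let I = [−1,1], K ∈ C(I²) continuously differentiable in its first variable, κ ∈ ℝ, and u ∈ L²(I). Define (A_ε u)(s) := ∫_{−1}^s K(s,t)e^{iκ(s−t)}u(t)dt + (−1)^ε ∫_s^1 K(s,t)e^{iκ(t−s)}u(t)dt for ε ∈ {0,1}. Then for each s ∈ (−1,1), the derivative satisfies D(A_ε u)(s) = (A_ε^{(1)} u)(s) + iκ (A_{ε̃} u)(s) + 2ε K(s,s)u(s), where A_ε^{(1)} is the analogous operator with kernel ∂K/∂s, and ε̃ = (ε+1) mod 2. -/

import Mathlib

/-!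
Split `∫ t in a..z, f z t` at the base point `s`: over `[a, s]` differentiate under the integral
sign (the derivative kernel is bounded on a compact rectangle, so dominated convergence applies),
while `∫ t in s..z, f z t = (z - s) • f s s + o(z - s)` by continuity of `f` at `(s, s)`.
For the oscillatory kernels, differentiating `exp (± iκ (s - t))` in `s` reproduces the kernel
times `± iκ`, which turns the sign `(-1) ^ ε` of the second term into `(-1) ^ (ε + 1)`; the two
diagonal contributions `K s s * u s * (1 - (-1) ^ ε)` add up to `2 ε K s s u s` for
`ε ∈ {0, 1}`.
-/

open Function Set intervalIntegral
open scoped Interval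

section LeibnizRule

variable {E : Type*} [NormedAddCommGroup E] [NormedSpace ℝ E]
  {f f' : ℝ → ℝ → E}

theorem hasDerivAt_intervalIntegral_param (hf : Continuous (uncurry f))
    (hf' : Continuous (uncurry f')) (hder : ∀ t x, HasDerivAt (fun z => f z t) (f' x t) x)
    (a b s : ℝ) :
    HasDerivAt (fun z => ∫ t in a..b, f z t) (∫ t in a..b, f' s t) s := by
  obtain ⟨C, hC⟩ := (isCompact_Icc.prod isCompact_uIcc).exists_bound_of_continuousOn
    (hf'.continuousOn (s := Icc (s - 1) (s + 1) ×ˢ [[a, b]]))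
  refine (hasDerivAt_integral_of_dominated_loc_of_deriv_le (bound := fun _ => C)
    (Metric.ball_mem_nhds s one_pos)
    (.of_forall fun z => (hf.uncurry_left z).aestronglyMeasurable)
    ((hf.uncurry_left s).intervalIntegrable _ _) (hf'.uncurry_left s).aestronglyMeasurable
    (.of_forall fun t ht z hz => hC (z, t) ⟨?_, uIoc_subset_uIcc ht⟩) intervalIntegrable_const
    (.of_forall fun t _ z _ => hder t z)).2
  rw [Metric.mem_ball, Real.dist_eq, abs_lt] at hz
  constructor <;> linarith

theorem hasDerivAt_intervalIntegral_diag [CompleteSpace E] (hf : Continuous (uncurry f)) (s : ℝ) :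
    HasDerivAt (fun z => ∫ t in s..z, f z t) (f s s) s := by
  rw [hasDerivAt_iff_isLittleO, Asymptotics.isLittleO_iff]
  intro c hc
  obtain ⟨δ, hδ, hf_near⟩ := Metric.continuousAt_iff.mp (hf.continuousAt (x := (s, s))) c hc
  filter_upwards [Metric.ball_mem_nhds s hδ] with z (hz : dist z s < δ)
  have hclose : ∀ t ∈ Ι s z, ‖f z t - f s s‖ ≤ c := fun t ht => by
    rw [← dist_eq_norm]
    refine (hf_near (x := (z, t)) ?_).le
    rw [Prod.dist_eq, Real.dist_eq]
    refine max_lt hz ?_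
    exact (abs_sub_left_of_mem_uIcc (uIoc_subset_uIcc ht)).trans_lt hz
  calc ‖(∫ t in s..z, f z t) - (∫ t in s..s, f s t) - (z - s) • f s s‖
      = ‖∫ t in s..z, (f z t - f s s)‖ := by
        rw [integral_same, sub_zero, integral_sub ((hf.uncurry_left z).intervalIntegrable _ _)
          intervalIntegrable_const, intervalIntegral.integral_const]
    _ ≤ c * |z - s| := norm_integral_le_of_norm_le_const hclose
    _ = c * ‖z - s‖ := rfl

theorem hasDerivAt_intervalIntegral_upper_param [CompleteSpace E]
    (hf : Continuous (uncurry f)) (hf' : Continuous (uncurry f'))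
    (hder : ∀ t x, HasDerivAt (fun z => f z t) (f' x t) x) (a s : ℝ) :
    HasDerivAt (fun z => ∫ t in a..z, f z t) ((∫ t in a..s, f' s t) + f s s) s := by
  refine ((hasDerivAt_intervalIntegral_param hf hf' hder a s s).add
    (hasDerivAt_intervalIntegral_diag hf s)).congr_of_eventuallyEq (.of_forall fun z => ?_)
  exact (integral_add_adjacent_intervals ((hf.uncurry_left z).intervalIntegrable _ _)
    ((hf.uncurry_left z).intervalIntegrable _ _)).symm

theorem hasDerivAt_intervalIntegral_lower_param [CompleteSpace E]
    (hf : Continuous (uncurry f)) (hf' : Continuous (uncurry f'))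
    (hder : ∀ t x, HasDerivAt (fun z => f z t) (f' x t) x) (b s : ℝ) :
    HasDerivAt (fun z => ∫ t in z..b, f z t) ((∫ t in s..b, f' s t) - f s s) s := by
  refine ((hasDerivAt_intervalIntegral_param hf hf' hder s b s).sub
    (hasDerivAt_intervalIntegral_diag hf s)).congr_of_eventuallyEq (.of_forall fun z => ?_)
  exact (integral_interval_sub_left ((hf.uncurry_left z).intervalIntegrable _ _)
    ((hf.uncurry_left z).intervalIntegrable _ _)).symm

end LeibnizRule

section Oscillatory

open Complex

variable {K K' : ℝ → ℝ → ℂ} {u : ℝ → ℂ}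

theorem HasDerivAt.mul_cexp_mul_const {g φ : ℝ → ℂ} {g' φ' : ℂ} {x : ℝ}
    (hg : HasDerivAt g g' x) (hφ : HasDerivAt φ φ' x) (w : ℂ) :
    HasDerivAt (fun z => g z * cexp (φ z) * w)
      (g' * cexp (φ x) * w + φ' * (g x * cexp (φ x) * w)) x :=
  ((hg.mul hφ.cexp).mul_const w).congr_deriv (by ring)

theorem continuous_uncurry_mul_cexp_mul (hK : Continuous (uncurry K)) {φ : ℝ → ℝ → ℂ}
    (hφ : Continuous (uncurry φ)) (hu : Continuous u) :
    Continuous (uncurry fun z t => K z t * cexp (φ z t) * u t) :=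
  (hK.mul hφ.cexp).mul (hu.comp continuous_snd)

theorem hasDerivAt_intervalIntegral_upper_mul_cexp (hK : Continuous (uncurry K))
    (hK' : Continuous (uncurry K')) (hder : ∀ t x, HasDerivAt (fun z => K z t) (K' x t) x)
    (hu : Continuous u) (c : ℂ) (a s : ℝ) :
    HasDerivAt (fun z => ∫ t in a..z, K z t * cexp (c * (z - t)) * u t)
      ((∫ t in a..s, K' s t * cexp (c * (s - t)) * u t)
        + c * (∫ t in a..s, K s t * cexp (c * (s - t)) * u t) + K s s * u s) s := by
  have hphase : Continuous (uncurry fun z t : ℝ => c * ((z : ℂ) - t)) := by fun_prop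
  have hphase_deriv (t x : ℝ) : HasDerivAt (fun z : ℝ => c * ((z : ℂ) - t)) c x := by
    simpa using ((hasDerivAt_id x).ofReal_comp.sub_const (t : ℂ)).const_mul c
  have hf := continuous_uncurry_mul_cexp_mul hK hphase hu
  have hf' := continuous_uncurry_mul_cexp_mul hK' hphase hu
  have h := hasDerivAt_intervalIntegral_upper_param (f' := fun z t =>
      K' z t * cexp (c * (z - t)) * u t + c * (K z t * cexp (c * (z - t)) * u t))
    hf (hf'.add (continuous_const.mul hf))
    (fun t x => (hder t x).mul_cexp_mul_const (hphase_deriv t x) (u t)) a s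
  rwa [integral_add ((hf'.uncurry_left s).intervalIntegrable a s)
    (((hf.uncurry_left s).intervalIntegrable a s).const_mul c), integral_const_mul,
    sub_self, mul_zero, Complex.exp_zero, mul_one] at h

theorem hasDerivAt_intervalIntegral_lower_mul_cexp (hK : Continuous (uncurry K))
    (hK' : Continuous (uncurry K')) (hder : ∀ t x, HasDerivAt (fun z => K z t) (K' x t) x)
    (hu : Continuous u) (c : ℂ) (b s : ℝ) :
    HasDerivAt (fun z => ∫ t in z..b, K z t * cexp (c * (t - z)) * u t)
      ((∫ t in s..b, K' s t * cexp (c * (t - s)) * u t)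
        - c * (∫ t in s..b, K s t * cexp (c * (t - s)) * u t) - K s s * u s) s := by
  have hphase : Continuous (uncurry fun z t : ℝ => c * ((t : ℂ) - z)) := by fun_prop
  have hphase_deriv (t x : ℝ) : HasDerivAt (fun z : ℝ => c * ((t : ℂ) - z)) (-c) x := by
    simpa using ((hasDerivAt_id x).ofReal_comp.const_sub (t : ℂ)).const_mul c
  have hf := continuous_uncurry_mul_cexp_mul hK hphase hu
  have hf' := continuous_uncurry_mul_cexp_mul hK' hphase hu
  have h := hasDerivAt_intervalIntegral_lower_param (f' := fun z t =>
      K' z t * cexp (c * (t - z)) * u t + -c * (K z t * cexp (c * (t - z)) * u t))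
    hf (hf'.add (continuous_const.mul hf))
    (fun t x => (hder t x).mul_cexp_mul_const (hphase_deriv t x) (u t)) b s
  rwa [integral_add ((hf'.uncurry_left s).intervalIntegrable s b)
    (((hf.uncurry_left s).intervalIntegrable s b).const_mul (-c)), integral_const_mul,
    sub_self, mul_zero, Complex.exp_zero, mul_one, neg_mul, ← sub_eq_add_neg] at h

end Oscillatory

theorem derivative_of_oscillatory_operator_general (K K' : ℝ → ℝ → ℂ)
    (hK : Continuous fun p : ℝ × ℝ => K p.1 p.2)
    (hK' : Continuous fun p : ℝ × ℝ => K' p.1 p.2)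
    (hder : ∀ t s : ℝ, HasDerivAt (fun z => K z t) (K' s t) s)
    (κ : ℝ) (u : ℝ → ℂ) (hu : Continuous u)
    (ε : ℕ) (hε : ε = 0 ∨ ε = 1) (s : ℝ) :
    HasDerivAt
      (fun z => (∫ t in (-1 : ℝ)..z, K z t * Complex.exp (Complex.I * κ * (z - t)) * u t)
        + (-1 : ℂ) ^ ε * ∫ t in z..(1 : ℝ), K z t * Complex.exp (Complex.I * κ * (t - z)) * u t)
      (((∫ t in (-1 : ℝ)..s, K' s t * Complex.exp (Complex.I * κ * (s - t)) * u t)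
          + (-1 : ℂ) ^ ε * ∫ t in s..(1 : ℝ), K' s t * Complex.exp (Complex.I * κ * (t - s)) * u t)
        + Complex.I * κ *
          ((∫ t in (-1 : ℝ)..s, K s t * Complex.exp (Complex.I * κ * (s - t)) * u t)
            + (-1 : ℂ) ^ ((ε + 1) % 2) *
              ∫ t in s..(1 : ℝ), K s t * Complex.exp (Complex.I * κ * (t - s)) * u t)
        + 2 * (ε : ℂ) * K s s * u s) s := by
  have hupper := hasDerivAt_intervalIntegral_upper_mul_cexp hK hK' hder hu (Complex.I * κ) (-1) s
  have hlower := hasDerivAt_intervalIntegral_lower_mul_cexp hK hK' hder hu (Complex.I * κ) 1 s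
  refine (hupper.add (hlower.const_mul ((-1 : ℂ) ^ ε))).congr_deriv ?_
  rcases hε with rfl | rfl <;> ring

theorem derivative_of_oscillatory_operator (K K' : ℝ → ℝ → ℂ)
    (hK : Continuous fun p : ℝ × ℝ => K p.1 p.2)
    (hK' : Continuous fun p : ℝ × ℝ => K' p.1 p.2)
    (hder : ∀ t s : ℝ, HasDerivAt (fun z => K z t) (K' s t) s)
    (κ : ℝ) (u : ℝ → ℂ) (hu : Continuous u)
    (ε : ℕ) (hε : ε = 0 ∨ ε = 1) (s : ℝ) (hs : s ∈ Set.Ioo (-1 : ℝ) 1) :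
    HasDerivAt
      (fun z => (∫ t in (-1 : ℝ)..z, K z t * Complex.exp (Complex.I * κ * (z - t)) * u t)
        + (-1 : ℂ) ^ ε * ∫ t in z..(1 : ℝ), K z t * Complex.exp (Complex.I * κ * (t - z)) * u t)
      (((∫ t in (-1 : ℝ)..s, K' s t * Complex.exp (Complex.I * κ * (s - t)) * u t)
          + (-1 : ℂ) ^ ε * ∫ t in s..(1 : ℝ), K' s t * Complex.exp (Complex.I * κ * (t - s)) * u t)
        + Complex.I * κ *
          ((∫ t in (-1 : ℝ)..s, K s t * Complex.exp (Complex.I * κ * (s - t)) * u t)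
            + (-1 : ℂ) ^ ((ε + 1) % 2) *
              ∫ t in s..(1 : ℝ), K s t * Complex.exp (Complex.I * κ * (t - s)) * u t)
        + 2 * (ε : ℂ) * K s s * u s) s :=
  derivative_of_oscillatory_operator_general K K' hK hK' hder κ u hu ε hε s
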